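/- arXiv:1505.01328 — 3 statements merged into one kernel-verified Lean document; each statement's English description precedes it below -/
import Mathlib

section
/- The map Γ is Lipschitz with respect to the sup norm: for all bounded functions f, f̃ : [0,T] → ℝᴺ one has ‖Γ(f) − Γ(f̃)‖_T ≤ (1 + √N) ‖f − f̃‖_T. -/
open Set

/-- The coordinate sum `1 · x` of a vector in Euclidean space. -/
noncomputable def sumC {N : ℕ} (x : EuclideanSpace ℝ (Fin N)) : ℝ := ∑ i, x i

/-- The regulator `g_f(t) = sup_{0 ≤ u ≤ t} (θ - 1·f(u))⁻`. -/
noncomputable def reg (N : ℕ) (θ : ℝ) (f : ℝ → EuclideanSpace ℝ (Fin N)) (t : ℝ) : ℝ :=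
  sSup ((fun u => max (sumC (f u) - θ) 0) '' Icc 0 t)

/-- The `N`-th standard basis vector `e_N`. -/
noncomputable def eN (N : ℕ) (hN : 1 ≤ N) : EuclideanSpace ℝ (Fin N) :=
  EuclideanSpace.single ⟨N - 1, by omega⟩ 1

/-- The Skorohod-type reflection map `Γ(f)(t) = f(t) - g_f(t) e_N`. -/
noncomputable def Gam (N : ℕ) (hN : 1 ≤ N) (θ : ℝ) (f : ℝ → EuclideanSpace ℝ (Fin N))
    (t : ℝ) : EuclideanSpace ℝ (Fin N) :=
  f t - reg N θ f t • eN N hN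

/-- The sup norm `‖f‖_T = sup_{t ∈ [0,T]} ‖f(t)‖`. -/
noncomputable def supNorm (N : ℕ) (T : ℝ) (f : ℝ → EuclideanSpace ℝ (Fin N)) : ℝ :=
  sSup ((fun t => ‖f t‖) '' Icc 0 T)

/-! The key estimate is `|g_f(t) - g_f̃(t)| ≤ √N ‖f - f̃‖_T`: the map `x ↦ (θ - x)⁻` is 1-Lipschitz,
suprema over the same index set differ by at most the largest pointwise difference, and by
Cauchy–Schwarz `|1·(f(u) - f̃(u))| ≤ √N ‖f(u) - f̃(u)‖`. Since `‖e_N‖ = 1`, the triangle inequality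
then bounds `‖Γ(f)(t) - Γ(f̃)(t)‖` by `‖f(t) - f̃(t)‖ + √N ‖f - f̃‖_T`. -/

lemma csSup_image_le_csSup_image_add {α : Type*} {s : Set α} (hs : s.Nonempty) {p q : α → ℝ}
    (hq : BddAbove (q '' s)) {ε : ℝ} (h : ∀ u ∈ s, p u ≤ q u + ε) :
    sSup (p '' s) ≤ sSup (q '' s) + ε := by
  refine csSup_le (hs.image _) ?_
  rintro _ ⟨u, hu, rfl⟩
  linarith [h u hu, le_csSup hq (mem_image_of_mem q hu)]

lemma abs_csSup_image_sub_csSup_image_le {α : Type*} {s : Set α} (hs : s.Nonempty)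
    {p q : α → ℝ} (hp : BddAbove (p '' s)) (hq : BddAbove (q '' s)) {ε : ℝ}
    (h : ∀ u ∈ s, |p u - q u| ≤ ε) :
    |sSup (p '' s) - sSup (q '' s)| ≤ ε := by
  rw [abs_sub_le_iff, sub_le_iff_le_add', sub_le_iff_le_add']
  exact ⟨csSup_image_le_csSup_image_add hs hq fun u hu => by linarith [(abs_le.mp (h u hu)).2],
    csSup_image_le_csSup_image_add hs hp fun u hu => by linarith [(abs_le.mp (h u hu)).1]⟩

section Euclidean

variable {N : ℕ}

lemma sumC_sub (x y : EuclideanSpace ℝ (Fin N)) : sumC (x - y) = sumC x - sumC y := by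
  simp [sumC, Finset.sum_sub_distrib]

lemma abs_sumC_le (x : EuclideanSpace ℝ (Fin N)) : |sumC x| ≤ Real.sqrt N * ‖x‖ := by
  let one : EuclideanSpace ℝ (Fin N) := WithLp.toLp 2 fun _ => 1
  have h_inner : inner ℝ one x = sumC x := by simp [one, PiLp.inner_apply, sumC]
  have h_norm : ‖one‖ = Real.sqrt N := by simp [one, EuclideanSpace.norm_eq]
  simpa [h_inner, h_norm] using abs_real_inner_le_norm one x

lemma bddAbove_sumC_image {α : Type*} {s : Set α} {f : α → EuclideanSpace ℝ (Fin N)} {C : ℝ}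
    (hf : ∀ u ∈ s, ‖f u‖ ≤ C) : BddAbove ((fun u => sumC (f u)) '' s) := by
  refine ⟨Real.sqrt N * C, ?_⟩
  rintro _ ⟨u, hu, rfl⟩
  calc sumC (f u) ≤ |sumC (f u)| := le_abs_self _
    _ ≤ Real.sqrt N * ‖f u‖ := abs_sumC_le _
    _ ≤ Real.sqrt N * C := mul_le_mul_of_nonneg_left (hf u hu) (Real.sqrt_nonneg _)

lemma abs_reg_sub_reg_le {θ t D : ℝ} {f g : ℝ → EuclideanSpace ℝ (Fin N)} (ht : 0 ≤ t)
    (hf : BddAbove ((fun u => sumC (f u)) '' Icc 0 t))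
    (hg : BddAbove ((fun u => sumC (g u)) '' Icc 0 t))
    (hD : ∀ u ∈ Icc 0 t, ‖f u - g u‖ ≤ D) :
    |reg N θ f t - reg N θ g t| ≤ Real.sqrt N * D := by
  have h_mono : Monotone fun x : ℝ => max (x - θ) 0 := fun _ _ hxy =>
    max_le_max (sub_le_sub_right hxy θ) le_rfl
  have bdd : ∀ h : ℝ → EuclideanSpace ℝ (Fin N), BddAbove ((fun u => sumC (h u)) '' Icc 0 t) →
      BddAbove ((fun u => max (sumC (h u) - θ) 0) '' Icc 0 t) := fun h hh => by
    simpa only [image_image] using h_mono.map_bddAbove hh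
  refine abs_csSup_image_sub_csSup_image_le ⟨0, left_mem_Icc.mpr ht⟩ (bdd f hf) (bdd g hg)
    fun u hu => ?_
  calc |max (sumC (f u) - θ) 0 - max (sumC (g u) - θ) 0|
      ≤ |(sumC (f u) - θ) - (sumC (g u) - θ)| := abs_max_sub_max_le_abs _ _ _
    _ = |sumC (f u - g u)| := by rw [sumC_sub, sub_sub_sub_cancel_right]
    _ ≤ Real.sqrt N * ‖f u - g u‖ := abs_sumC_le _
    _ ≤ Real.sqrt N * D := mul_le_mul_of_nonneg_left (hD u hu) (Real.sqrt_nonneg _)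

lemma norm_eN (hN : 1 ≤ N) : ‖eN N hN‖ = 1 := by
  simp [eN]

lemma norm_Gam_sub_Gam_le (hN : 1 ≤ N) (θ : ℝ) (f g : ℝ → EuclideanSpace ℝ (Fin N)) (t : ℝ) :
    ‖Gam N hN θ f t - Gam N hN θ g t‖ ≤ ‖f t - g t‖ + |reg N θ f t - reg N θ g t| := by
  have h_eq : Gam N hN θ f t - Gam N hN θ g t
      = (f t - g t) - (reg N θ f t - reg N θ g t) • eN N hN := by
    simp only [Gam, sub_smul]
    abel
  rw [h_eq]
  refine (norm_sub_le _ _).trans_eq ?_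
  rw [norm_smul, norm_eN, mul_one, Real.norm_eq_abs]

lemma le_supNorm {T : ℝ} {f : ℝ → EuclideanSpace ℝ (Fin N)} {C : ℝ}
    (hf : ∀ t ∈ Icc 0 T, ‖f t‖ ≤ C) {t : ℝ} (ht : t ∈ Icc 0 T) : ‖f t‖ ≤ supNorm N T f :=
  le_csSup ⟨C, by rintro _ ⟨u, hu, rfl⟩; exact hf u hu⟩ (mem_image_of_mem (fun t => ‖f t‖) ht)

lemma supNorm_nonneg (T : ℝ) (f : ℝ → EuclideanSpace ℝ (Fin N)) : 0 ≤ supNorm N T f :=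
  Real.sSup_nonneg <| by
    rintro _ ⟨t, -, rfl⟩
    exact norm_nonneg _

lemma supNorm_le {T B : ℝ} {f : ℝ → EuclideanSpace ℝ (Fin N)} (hB : 0 ≤ B)
    (hf : ∀ t ∈ Icc 0 T, ‖f t‖ ≤ B) : supNorm N T f ≤ B :=
  Real.sSup_le (by
    rintro _ ⟨t, ht, rfl⟩
    exact hf t ht) hB

end Euclidean

theorem gamma_lipschitz_general (N : ℕ) (hN : 1 ≤ N) (θ T : ℝ)
    (f ftil : ℝ → EuclideanSpace ℝ (Fin N))
    (hf : ∃ C, ∀ t ∈ Icc (0:ℝ) T, ‖f t‖ ≤ C)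
    (hftil : ∃ C, ∀ t ∈ Icc (0:ℝ) T, ‖ftil t‖ ≤ C) :
    supNorm N T (fun t => Gam N hN θ f t - Gam N hN θ ftil t)
      ≤ (1 + Real.sqrt N) * supNorm N T (fun t => f t - ftil t) := by
  obtain ⟨C, hC⟩ := hf
  obtain ⟨C', hC'⟩ := hftil
  set D := supNorm N T (fun t => f t - ftil t)
  have hD : ∀ t ∈ Icc (0:ℝ) T, ‖f t - ftil t‖ ≤ D := fun t ht =>
    le_supNorm (fun u hu => (norm_sub_le _ _).trans (add_le_add (hC u hu) (hC' u hu))) ht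
  refine supNorm_le (mul_nonneg (by positivity) (supNorm_nonneg _ _)) fun t ht => ?_
  have sub_T : Icc 0 t ⊆ Icc (0:ℝ) T := Icc_subset_Icc_right ht.2
  have h_reg : |reg N θ f t - reg N θ ftil t| ≤ Real.sqrt N * D :=
    abs_reg_sub_reg_le ht.1 (bddAbove_sumC_image fun u hu => hC u (sub_T hu))
      (bddAbove_sumC_image fun u hu => hC' u (sub_T hu)) fun u hu => hD u (sub_T hu)
  calc ‖Gam N hN θ f t - Gam N hN θ ftil t‖
      ≤ ‖f t - ftil t‖ + |reg N θ f t - reg N θ ftil t| := norm_Gam_sub_Gam_le hN θ f ftil t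
    _ ≤ D + Real.sqrt N * D := add_le_add (hD t ht) h_reg
    _ = (1 + Real.sqrt N) * D := by ring

/-- The reflection map `Γ` is Lipschitz with constant `1 + √N` in the sup norm. -/
theorem gamma_lipschitz (N : ℕ) (hN : 1 ≤ N) (θ T : ℝ) (hT : 0 < T)
    (f ftil : ℝ → EuclideanSpace ℝ (Fin N))
    (hf : ∃ C, ∀ t ∈ Icc (0:ℝ) T, ‖f t‖ ≤ C)
    (hftil : ∃ C, ∀ t ∈ Icc (0:ℝ) T, ‖ftil t‖ ≤ C) :
    supNorm N T (fun t => Gam N hN θ f t - Gam N hN θ ftil t)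
      ≤ (1 + Real.sqrt N) * supNorm N T (fun t => f t - ftil t) :=
  gamma_lipschitz_general N hN θ T f ftil hf hftil
end

section
/- If f : [0,T] → ℝᴺ is continuous and 1·f(0) ≤ θ, then: g_f is continuous, nondecreasing, and g_f(0) = 0; 1·Γ(f)(t) ≤ θ for every t ∈ [0,T]; and g_f increases only on the boundary, i.e. for all 0 ≤ s ≤ t ≤ T, if 1·Γ(f)(u) < θ for every u ∈ [s,t], then g_f(t) = g_f(s). In particular, the pair (Γ(f), g_f) solves the Skorohod problem in G = {x ∈ ℝᴺ : 1·x ≤ θ} with reflection direction −e_N for the data f. -/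
open Set

/-!
The regulator is the running supremum of the continuous excess `φ u = (1·f(u) - θ)⁺`, so it is
continuous, nondecreasing and dominates `φ`; the last fact keeps `1·Γ(f) = 1·f - g_f` below `θ`.
If `g_f` grows on `[s, t]`, the maximum of `φ` over `[s, t]` is attained at some `u` with
`φ u = g_f(t) > 0`, and there `1·Γ(f)(u) = φ u - g_f(u) + θ ≥ θ`.
-/

noncomputable def runningSup (φ : ℝ → ℝ) (t : ℝ) : ℝ := sSup (φ '' Icc 0 t)

section RunningSup

variable {φ : ℝ → ℝ} {T : ℝ}

theorem runningSup_zero (φ : ℝ → ℝ) : runningSup φ 0 = φ 0 := by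
  rw [runningSup, Icc_self, image_singleton, csSup_singleton]

theorem le_runningSup (hφ : BddAbove (φ '' Icc 0 T)) {t : ℝ} (ht : t ∈ Icc 0 T) :
    φ t ≤ runningSup φ t :=
  le_csSup (hφ.mono (image_mono (Icc_subset_Icc_right ht.2))) (mem_image_of_mem _ ⟨ht.1, le_rfl⟩)

theorem runningSup_monotoneOn (hφ : BddAbove (φ '' Icc 0 T)) :
    MonotoneOn (runningSup φ) (Icc 0 T) := fun _ hs _ ht hst =>
  csSup_le_csSup (hφ.mono (image_mono (Icc_subset_Icc_right ht.2)))
    ((nonempty_Icc.2 hs.1).image φ) (image_mono (Icc_subset_Icc_right hst))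

theorem runningSup_eq_max (hφ : BddAbove (φ '' Icc 0 T)) {s t : ℝ} (hs : 0 ≤ s) (hst : s ≤ t)
    (ht : t ≤ T) : runningSup φ t = max (runningSup φ s) (sSup (φ '' Icc s t)) := by
  rw [runningSup, runningSup, ← Icc_union_Icc_eq_Icc hs hst, image_union]
  exact csSup_union (hφ.mono (image_mono (Icc_subset_Icc_right (hst.trans ht))))
    ((nonempty_Icc.2 hs).image φ) (hφ.mono (image_mono (Icc_subset_Icc hs ht)))
    ((nonempty_Icc.2 hst).image φ)

theorem exists_eq_runningSup_of_lt (hφ : ContinuousOn φ (Icc 0 T)) {s t : ℝ} (hs : 0 ≤ s)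
    (hst : s ≤ t) (ht : t ≤ T) (hlt : runningSup φ s < runningSup φ t) :
    ∃ u ∈ Icc s t, φ u = runningSup φ t := by
  obtain ⟨u, hu, hmax⟩ :=
    isCompact_Icc.exists_sSup_image_eq (nonempty_Icc.2 hst) (hφ.mono (Icc_subset_Icc hs ht))
  have hsplit := runningSup_eq_max (isCompact_Icc.bddAbove_image hφ) hs hst ht
  rw [hsplit] at hlt
  refine ⟨u, hu, ?_⟩
  rw [← hmax, hsplit, max_eq_right ((lt_max_iff.1 hlt).resolve_left (lt_irrefl _)).le]

theorem runningSup_continuousOn (hφ : ContinuousOn φ (Icc 0 T)) :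
    ContinuousOn (runningSup φ) (Icc 0 T) := by
  rcases lt_or_ge T 0 with hT | hT
  · simp [Icc_eq_empty_of_lt hT]
  set ψ : ℝ → ℝ := fun x => φ (projIcc 0 T hT x)
  have hψ : Continuous ψ :=
    hφ.comp_continuous (continuous_subtype_val.comp continuous_projIcc) fun x => (projIcc 0 T hT x).2
  -- Rescaling `[0, t]` to `[0, 1]` makes the domain of the supremum independent of `t`.
  have hcont : Continuous fun t => sSup ((fun r => ψ (r * t)) '' Icc 0 1) :=
    isCompact_Icc.continuous_sSup (f := fun t r => ψ (r * t)) (by fun_prop)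
  refine hcont.continuousOn.congr fun t ht => ?_
  have hrescale : (fun r => ψ (r * t)) '' Icc 0 1 = φ '' Icc 0 t := by
    rw [← image_image ψ (· * t), image_mul_right_Icc zero_le_one ht.1, zero_mul, one_mul]
    exact image_congr fun u hu => by simp [ψ, projIcc_of_mem _ ⟨hu.1, hu.2.trans ht.2⟩]
  simp only [runningSup, hrescale]

end RunningSup

theorem continuous_sumC {N : ℕ} : Continuous (sumC : EuclideanSpace ℝ (Fin N) → ℝ) :=
  continuous_finsetSum _ fun i _ => (EuclideanSpace.proj i).continuous

theorem sumC_Gam {N : ℕ} (hN : 1 ≤ N) (θ : ℝ) (f : ℝ → EuclideanSpace ℝ (Fin N)) (t : ℝ) :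
    sumC (Gam N hN θ f t) = sumC (f t) - reg N θ f t := by
  simp [Gam, sumC, eN, Finset.sum_sub_distrib]

theorem gamma_solves_skorohod_general (N : ℕ) (hN : 1 ≤ N) (θ T : ℝ)
    (f : ℝ → EuclideanSpace ℝ (Fin N))
    (hf : ContinuousOn f (Icc 0 T)) (hf0 : sumC (f 0) ≤ θ) :
    ContinuousOn (reg N θ f) (Icc 0 T) ∧
    MonotoneOn (reg N θ f) (Icc 0 T) ∧
    reg N θ f 0 = 0 ∧
    (∀ t ∈ Icc (0:ℝ) T, sumC (Gam N hN θ f t) ≤ θ) ∧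
    (∀ s t : ℝ, 0 ≤ s → s ≤ t → t ≤ T →
      (∀ u ∈ Icc s t, sumC (Gam N hN θ f u) < θ) → reg N θ f t = reg N θ f s) := by
  set φ : ℝ → ℝ := fun u => max (sumC (f u) - θ) 0
  have hreg : reg N θ f = runningSup φ := rfl
  have hφ : ContinuousOn φ (Icc 0 T) :=
    ((continuous_sumC.comp_continuousOn hf).sub continuousOn_const).sup continuousOn_const
  have hbdd : BddAbove (φ '' Icc 0 T) := isCompact_Icc.bddAbove_image hφ
  have hmono := runningSup_monotoneOn hbdd
  simp only [sumC_Gam, hreg]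
  refine ⟨runningSup_continuousOn hφ, hmono, ?_, fun t ht => ?_, fun s t hs hst ht hint => ?_⟩
  · simp [runningSup_zero, φ, hf0]
  · linarith [le_max_left (sumC (f t) - θ) 0, le_runningSup hbdd ht]
  · by_contra hne
    have hlt := (hmono ⟨hs, hst.trans ht⟩ ⟨hs.trans hst, ht⟩ hst).lt_of_ne' hne
    obtain ⟨u, hu, hφu⟩ := exists_eq_runningSup_of_lt hφ hs hst ht hlt
    have hpos : 0 < φ u := hφu ▸
      ((le_max_right _ _).trans (le_runningSup hbdd ⟨hs, hst.trans ht⟩)).trans_lt hlt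
    have hφu' : φ u = sumC (f u) - θ :=
      max_eq_left ((lt_max_iff.1 hpos).resolve_right (lt_irrefl 0)).le
    have hu_le := hmono ⟨hs.trans hu.1, hu.2.trans ht⟩ ⟨hs.trans hst, ht⟩ hu.2
    linarith [hint u hu]

/-- For continuous data starting in the half-space, `(Γ(f), g_f)` solves the Skorohod problem in
`G = {x : 1·x ≤ θ}` with reflection direction `-e_N`: the regulator is continuous, nondecreasing,
starts at `0`, the reflected path stays in `G`, and the regulator increases only at the boundary. -/
theorem gamma_solves_skorohod (N : ℕ) (hN : 1 ≤ N) (θ T : ℝ) (hT : 0 < T)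
    (f : ℝ → EuclideanSpace ℝ (Fin N))
    (hf : ContinuousOn f (Icc 0 T)) (hf0 : sumC (f 0) ≤ θ) :
    ContinuousOn (reg N θ f) (Icc 0 T) ∧
    MonotoneOn (reg N θ f) (Icc 0 T) ∧
    reg N θ f 0 = 0 ∧
    (∀ t ∈ Icc (0:ℝ) T, sumC (Gam N hN θ f t) ≤ θ) ∧
    (∀ s t : ℝ, 0 ≤ s → s ≤ t → t ≤ T →
      (∀ u ∈ Icc s t, sumC (Gam N hN θ f u) < θ) → reg N θ f t = reg N θ f s) :=
  gamma_solves_skorohod_general N hN θ T f hf hf0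
end

section
/- One-dimensional Skorohod reflection formula at an upper barrier: let c ∈ ℝ, let ξ : [0,T] → ℝ be continuous with ξ(0) ≤ c, and let ρ : [0,T] → ℝ be continuous and nondecreasing with ρ(0) = 0. Suppose that the function ζ := ξ − ρ satisfies ζ(t) ≤ c for all t ∈ [0,T] and that ρ is constant on every subinterval [s,t] of [0,T] on which ζ < c. Then ρ(t) = sup_{0 ≤ u ≤ t} (ξ(u) − c)⁺ for every t ∈ [0,T], where x⁺ = max(x,0). -/
open Set

/-- One-dimensional Skorohod reflection formula at an upper barrier `c`: if `ζ = ξ - ρ` stays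
below `c`, `ρ` is continuous, nondecreasing, starts at `0`, and increases only when `ζ = c`,
then `ρ(t) = sup_{0 ≤ u ≤ t} (ξ(u) - c)⁺`. -/
theorem skorohod_one_dim (T : ℝ) (hT : 0 < T) (c : ℝ) (ξ ρ : ℝ → ℝ)
    (hξ : ContinuousOn ξ (Icc 0 T)) (hξ0 : ξ 0 ≤ c)
    (hρ : ContinuousOn ρ (Icc 0 T)) (hρmono : MonotoneOn ρ (Icc 0 T)) (hρ0 : ρ 0 = 0)
    (hbar : ∀ t ∈ Icc (0:ℝ) T, ξ t - ρ t ≤ c)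
    (hflat : ∀ s t : ℝ, 0 ≤ s → s ≤ t → t ≤ T →
      (∀ u ∈ Icc s t, ξ u - ρ u < c) → ρ t = ρ s) :
    ∀ t ∈ Icc (0:ℝ) T, ρ t = sSup ((fun u => max (ξ u - c) 0) '' Icc 0 t) := by
  intro t ht
  obtain ⟨ht0, htT⟩ := ht
  have h0T : (0:ℝ) ∈ Icc (0:ℝ) T := ⟨le_rfl, le_of_lt hT⟩
  have htmem : t ∈ Icc (0:ℝ) T := ⟨ht0, htT⟩
  have hIcc : Icc (0:ℝ) t ⊆ Icc 0 T := Icc_subset_Icc le_rfl htT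
  have hρnonneg : ∀ u ∈ Icc (0:ℝ) T, 0 ≤ ρ u := by
    intro u hu
    have := hρmono h0T hu hu.1
    linarith
  have hbound : ∀ x ∈ (fun u => max (ξ u - c) 0) '' Icc 0 t, x ≤ ρ t := by
    rintro x ⟨u, hu, rfl⟩
    have h1 := hbar u (hIcc hu)
    have h2 : ρ u ≤ ρ t := hρmono (hIcc hu) htmem hu.2
    have h3 := hρnonneg t htmem
    exact max_le (by linarith) h3
  have hne : ((fun u => max (ξ u - c) 0) '' Icc 0 t).Nonempty :=
    (nonempty_Icc.2 ht0).image _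
  have hbdd : BddAbove ((fun u => max (ξ u - c) 0) '' Icc 0 t) := ⟨ρ t, hbound⟩
  have hle : sSup ((fun u => max (ξ u - c) 0) '' Icc 0 t) ≤ ρ t := csSup_le hne hbound
  -- the reverse inequality
  set M := sSup ((fun u => max (ξ u - c) 0) '' Icc 0 t) with hM
  have hM0 : 0 ≤ M := by
    have : max (ξ 0 - c) 0 ≤ M :=
      le_csSup hbdd ⟨0, left_mem_Icc.2 ht0, rfl⟩
    exact le_trans (le_max_right _ _) this
  -- set A of points where ρ hits ρ t
  set A : Set ℝ := Icc 0 t ∩ ρ ⁻¹' {ρ t} with hA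
  have hAne : A.Nonempty := ⟨t, right_mem_Icc.2 ht0, rfl⟩
  have hAbdd : BddBelow A := ⟨0, fun u hu => hu.1.1⟩
  have hAclosed : IsClosed A :=
    (hρ.mono hIcc).preimage_isClosed_of_isClosed isClosed_Icc isClosed_singleton
  set s := sInf A with hs
  have hsA : s ∈ A := hAclosed.csInf_mem hAne hAbdd
  have hs0 : 0 ≤ s := hsA.1.1
  have hst : s ≤ t := hsA.1.2
  have hρs : ρ s = ρ t := hsA.2
  have hsT : s ∈ Icc (0:ℝ) T := ⟨hs0, le_trans hst htT⟩
  have hlt : ∀ u, 0 ≤ u → u < s → ρ u < ρ t := by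
    intro u hu0 hus
    have hut : u ∈ Icc (0:ℝ) t := ⟨hu0, le_trans hus.le hst⟩
    have hle' : ρ u ≤ ρ t := hρmono (hIcc hut) htmem hut.2
    rcases lt_or_eq_of_le hle' with h | h
    · exact h
    · exact absurd (csInf_le hAbdd ⟨hut, h⟩) (not_le.2 hus)
  have hge : ρ t ≤ M := by
    rcases eq_or_lt_of_le hs0 with h | h
    · -- s = 0, so ρ t = ρ 0 = 0 ≤ M
      rw [← hρs, ← h, hρ0]; exact hM0
    · -- s > 0 : ε argument
      refine le_of_forall_pos_le_add ?_
      intro ε hε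
      have hcont : ContinuousWithinAt ρ (Icc 0 T) s := hρ.continuousWithinAt hsT
      rw [Metric.continuousWithinAt_iff] at hcont
      obtain ⟨δ, hδ, hδ'⟩ := hcont ε hε
      set s' := max (s - δ/2) 0 with hs'
      have hs'0 : 0 ≤ s' := le_max_right _ _
      have hs's : s' < s := max_lt (by linarith) h
      have hs'T : s' ∈ Icc (0:ℝ) T := ⟨hs'0, le_trans hs's.le hsT.2⟩
      have hdist : dist s' s < δ := by
        rw [Real.dist_eq, abs_lt]
        constructor
        · have : s - δ/2 ≤ s' := le_max_left _ _
          linarith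
        · linarith
      have hclose : |ρ s' - ρ s| < ε := by
        have := hδ' hs'T hdist
        rwa [Real.dist_eq] at this
      have hρs' : ρ s - ε < ρ s' := by
        rcases abs_lt.1 hclose with ⟨h1, _⟩
        linarith
      -- apply hflat contrapositive on [s', s]
      have hnot : ¬ (∀ u ∈ Icc s' s, ξ u - ρ u < c) := by
        intro hall
        have := hflat s' s hs'0 hs's.le hsT.2 hall
        have := hlt s' hs'0 hs's
        rw [← hρs] at this
        linarith
      push_neg at hnot
      obtain ⟨u, hu, hcu⟩ := hnot
      have huT : u ∈ Icc (0:ℝ) T := ⟨le_trans hs'0 hu.1, le_trans hu.2 hsT.2⟩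
      have heq : ξ u - ρ u = c := le_antisymm (hbar u huT) hcu
      have hut : u ∈ Icc (0:ℝ) t := ⟨le_trans hs'0 hu.1, le_trans hu.2 hst⟩
      have hMu : ρ u ≤ M := by
        have : max (ξ u - c) 0 ≤ M := le_csSup hbdd ⟨u, hut, rfl⟩
        have h2 : ξ u - c = ρ u := by linarith
        rw [h2] at this
        exact le_trans (le_max_left _ _) this
      have hρu : ρ s' ≤ ρ u := hρmono hs'T huT hu.1
      rw [← hρs]
      linarith
  linarith
end
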